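/- Let C > 0 and, for each n ≥ 1, let λ₁^{(n)},…,λ_n^{(n)} and b₁^{(n)},…,b_n^{(n)} be reals with |λ_i^{(n)}| ≤ C·n^{−3/2} and |b_i^{(n)}| ≤ C·n^{−3/2} for all i. Set s_n² = Σ_{i=1}^n (2(λ_i^{(n)})² + (b_i^{(n)})²) and assume lim inf_n n²·s_n² > 0. If z₁,…,z_n are i.i.d. standard real Gaussians and r_i = λ_i^{(n)}·z_i² + b_i^{(n)}·z_i, then (1/s_n⁴)·Σ_{i=1}^n E[(r_i − E[r_i])⁴] → 0 as n → ∞; that is, Lyapunov's condition (with fourth moments) holds for the triangular array (r_i). -/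

import Mathlib

/-!
Centering costs at most a factor `2 ^ p` in even moments, since
`(f - m) ^ p ≤ 2 ^ (p - 1) (f ^ p + m ^ p)` and `m ^ p ≤ E[f ^ p]` by Jensen. Moreover
`|r_i| ≤ C n^(-3/2) (z_i² + |z_i|)`, so every summand is `O(n⁻⁶)` with a constant given by
Gaussian moments and the whole sum is `O(n⁻⁵)`. Since `s_n⁴ ≥ c² n⁻⁴`, the Lyapunov ratio is
`O(1 / n)`.
-/

open MeasureTheory ProbabilityTheory Filter

noncomputable section

namespace LSSVM

def sn2 (l b : ℕ → ℕ → ℝ) (n : ℕ) : ℝ :=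
  ∑ i ∈ Finset.range n, (2 * l n i ^ 2 + b n i ^ 2)

open scoped NNReal

theorem integral_sub_integral_pow_le {α : Type*} [MeasurableSpace α] {μ : Measure α}
    [IsProbabilityMeasure μ] {f : α → ℝ} {p : ℕ} (hp : Even p) (hf : Integrable f μ)
    (hfp : Integrable (fun x ↦ f x ^ p) μ) :
    ∫ x, (f x - ∫ y, f y ∂μ) ^ p ∂μ ≤ 2 ^ p * ∫ x, f x ^ p ∂μ := by
  obtain rfl | hp0 := eq_or_ne p 0
  · simp
  set m := ∫ y, f y ∂μ
  have hpt : ∀ x, (f x - m) ^ p ≤ 2 ^ (p - 1) * (f x ^ p + m ^ p) := fun x ↦ by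
    simpa [sub_eq_add_neg, hp.neg_pow] using hp.add_pow_le (a := f x) (b := -m)
  have hjensen : m ^ p ≤ ∫ x, f x ^ p ∂μ :=
    hp.convexOn_pow.map_integral_le (continuous_pow p).continuousOn isClosed_univ
      (ae_of_all _ fun _ ↦ Set.mem_univ _) hf hfp
  have hdom : Integrable (fun x ↦ 2 ^ (p - 1) * (f x ^ p + m ^ p)) μ :=
    (hfp.add (integrable_const _)).const_mul _
  have hcent : Integrable (fun x ↦ (f x - m) ^ p) μ :=
    hdom.mono' ((hf.aestronglyMeasurable.sub aestronglyMeasurable_const).pow p)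
      (ae_of_all _ fun x ↦ by
        rw [Real.norm_eq_abs, abs_of_nonneg (hp.pow_nonneg _)]; exact hpt x)
  calc ∫ x, (f x - m) ^ p ∂μ
      ≤ ∫ x, 2 ^ (p - 1) * (f x ^ p + m ^ p) ∂μ := integral_mono hcent hdom hpt
    _ = 2 ^ (p - 1) * (∫ x, f x ^ p ∂μ + m ^ p) := by
      rw [integral_const_mul, integral_add hfp (integrable_const _), integral_const]
      simp
    _ ≤ 2 ^ (p - 1) * (2 * ∫ x, f x ^ p ∂μ) := by gcongr; linarith
    _ = 2 ^ p * ∫ x, f x ^ p ∂μ := by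
      rw [← mul_assoc, ← pow_succ, Nat.sub_add_cancel (Nat.one_le_iff_ne_zero.2 hp0)]

theorem integrable_pow_gaussianReal (m : ℝ) (v : ℝ≥0) (n : ℕ) :
    Integrable (fun x : ℝ ↦ x ^ n) (gaussianReal m v) :=
  integrable_pow_of_mem_interior_integrableExpSet (X := id) (by simp) n

theorem quadratic_pow_four_le {L B D : ℝ} (hL : |L| ≤ D) (hB : |B| ≤ D) (x : ℝ) :
    (L * x ^ 2 + B * x) ^ 4 ≤ 8 * D ^ 4 * (x ^ 8 + x ^ 4) := by
  have h4 : Even 4 := by decide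
  have hL4 : L ^ 4 ≤ D ^ 4 := by
    rw [← h4.pow_abs]; exact pow_le_pow_left₀ (abs_nonneg L) hL 4
  have hB4 : B ^ 4 ≤ D ^ 4 := by
    rw [← h4.pow_abs]; exact pow_le_pow_left₀ (abs_nonneg B) hB 4
  calc (L * x ^ 2 + B * x) ^ 4 ≤ 2 ^ 3 * ((L * x ^ 2) ^ 4 + (B * x) ^ 4) := h4.add_pow_le
    _ = 8 * (L ^ 4 * x ^ 8 + B ^ 4 * x ^ 4) := by ring
    _ ≤ 8 * (D ^ 4 * x ^ 8 + D ^ 4 * x ^ 4) := by gcongr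
    _ = 8 * D ^ 4 * (x ^ 8 + x ^ 4) := by ring

theorem integral_quadratic_sub_integral_pow_four_le {m : ℝ} {v : ℝ≥0} {L B D : ℝ}
    (hL : |L| ≤ D) (hB : |B| ≤ D) :
    ∫ x, (L * x ^ 2 + B * x - ∫ y, (L * y ^ 2 + B * y) ∂gaussianReal m v) ^ 4 ∂gaussianReal m v
      ≤ 128 * D ^ 4 * ∫ x, (x ^ 8 + x ^ 4) ∂gaussianReal m v := by
  have hmom : Integrable (fun x : ℝ ↦ x ^ 8 + x ^ 4) (gaussianReal m v) :=
    (integrable_pow_gaussianReal m v 8).add (integrable_pow_gaussianReal m v 4)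
  have hf : Integrable (fun x : ℝ ↦ L * x ^ 2 + B * x) (gaussianReal m v) :=
    ((integrable_pow_gaussianReal m v 2).const_mul L).add
      (by simpa using (integrable_pow_gaussianReal m v 1).const_mul B)
  have hf4 : Integrable (fun x : ℝ ↦ (L * x ^ 2 + B * x) ^ 4) (gaussianReal m v) :=
    (hmom.const_mul (8 * D ^ 4)).mono' (by fun_prop) (ae_of_all _ fun x ↦ by
      rw [Real.norm_eq_abs, abs_of_nonneg (by positivity)]; exact quadratic_pow_four_le hL hB x)
  calc _ ≤ 2 ^ 4 * ∫ x, (L * x ^ 2 + B * x) ^ 4 ∂gaussianReal m v :=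
        integral_sub_integral_pow_le (by decide) hf hf4
    _ ≤ 2 ^ 4 * ∫ x, 8 * D ^ 4 * (x ^ 8 + x ^ 4) ∂gaussianReal m v := by
        gcongr ?_ * ?_
        exact integral_mono hf4 (hmom.const_mul _) (quadratic_pow_four_le hL hB)
    _ = 128 * D ^ 4 * ∫ x, (x ^ 8 + x ^ 4) ∂gaussianReal m v := by
        rw [integral_const_mul]; ring

theorem _root_.ProbabilityTheory.HasLaw.integral_comp_sub_integral_comp_pow {Ω 𝓧 : Type*}
    {mΩ : MeasurableSpace Ω} {m𝓧 : MeasurableSpace 𝓧} {P : Measure Ω} {μ : Measure 𝓧} {X : Ω → 𝓧}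
    (hX : HasLaw X μ P) {f : 𝓧 → ℝ} (hf : AEStronglyMeasurable f μ) (p : ℕ) :
    ∫ ω, (f (X ω) - ∫ ω', f (X ω') ∂P) ^ p ∂P = ∫ x, (f x - ∫ y, f y ∂μ) ^ p ∂μ := by
  have hmean := hX.integral_comp hf
  have hcent :=
    hX.integral_comp ((hf.sub (aestronglyMeasurable_const (b := ∫ y, f y ∂μ))).pow p)
  simp only [Function.comp_def] at hmean hcent
  rw [hmean]
  exact hcent

theorem div_rpow_three_halves_pow_four (C x : ℝ) (hx : 0 ≤ x) :
    (C / x ^ ((3 : ℝ) / 2)) ^ 4 = C ^ 4 / x ^ 6 := by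
  rw [div_pow, ← Real.rpow_natCast (x ^ _), ← Real.rpow_mul hx]
  norm_num

theorem inv_sq_mul_le_of_le_sq_mul {s S A c x : ℝ} (hx : 0 < x) (hc : 0 < c)
    (hs : c ≤ x ^ 2 * s) (hS0 : 0 ≤ S) (hS : S ≤ x * (A / x ^ 6)) :
    (s ^ 2)⁻¹ * S ≤ A / c ^ 2 / x := by
  have hs' : c / x ^ 2 ≤ s := by rw [div_le_iff₀ (by positivity)]; linarith
  have hinv : (s ^ 2)⁻¹ ≤ x ^ 4 / c ^ 2 := by
    calc (s ^ 2)⁻¹ ≤ ((c / x ^ 2) ^ 2)⁻¹ := by gcongr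
      _ = x ^ 4 / c ^ 2 := by field_simp
  calc (s ^ 2)⁻¹ * S ≤ x ^ 4 / c ^ 2 * (x * (A / x ^ 6)) := by gcongr
    _ = A / c ^ 2 / x := by field_simp

theorem statement16_general {Ω : Type*} [MeasurableSpace Ω] (P : Measure Ω) [IsProbabilityMeasure P]
    (C : ℝ) (l b : ℕ → ℕ → ℝ)
    (hl : ∀ n : ℕ, ∀ i < n, |l n i| ≤ C / (n : ℝ) ^ ((3 : ℝ) / 2))
    (hb : ∀ n : ℕ, ∀ i < n, |b n i| ≤ C / (n : ℝ) ^ ((3 : ℝ) / 2))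
    (hliminf : ∃ c > (0 : ℝ), ∀ᶠ n : ℕ in atTop, c ≤ (n : ℝ) ^ 2 * sn2 l b n)
    (z : ℕ → Ω → ℝ) (hmeas : ∀ i, Measurable (z i))
    (hgauss : ∀ i, Measure.map (z i) P = gaussianReal 0 1) :
    Tendsto
      (fun n : ℕ => (sn2 l b n ^ 2)⁻¹ * ∑ i ∈ Finset.range n,
        ∫ w, (l n i * z i w ^ 2 + b n i * z i w
          - ∫ w', (l n i * z i w' ^ 2 + b n i * z i w') ∂P) ^ 4 ∂P)
      atTop (nhds 0) := by
  obtain ⟨c, hc, hev⟩ := hliminf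
  set M := ∫ x, (x ^ 8 + x ^ 4) ∂gaussianReal 0 1
  have hterm : ∀ n, ∀ i ∈ Finset.range n, ∫ w, (l n i * z i w ^ 2 + b n i * z i w
      - ∫ w', (l n i * z i w' ^ 2 + b n i * z i w') ∂P) ^ 4 ∂P ≤ 128 * M * C ^ 4 / n ^ 6 := by
    intro n i hi
    rw [Finset.mem_range] at hi
    have hz : HasLaw (z i) (gaussianReal 0 1) P := ⟨(hmeas i).aemeasurable, hgauss i⟩
    rw [hz.integral_comp_sub_integral_comp_pow (f := fun x ↦ l n i * x ^ 2 + b n i * x)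
      (by fun_prop) 4]
    calc _ ≤ 128 * (C / (n : ℝ) ^ ((3 : ℝ) / 2)) ^ 4 * M :=
          integral_quadratic_sub_integral_pow_four_le (hl n i hi) (hb n i hi)
      _ = 128 * M * C ^ 4 / n ^ 6 := by
          rw [div_rpow_three_halves_pow_four C n n.cast_nonneg]; ring
  refine squeeze_zero' (.of_forall fun n ↦ mul_nonneg (by positivity) (Finset.sum_nonneg
    fun i _ ↦ integral_nonneg fun w ↦ by positivity)) ?_
    (tendsto_const_div_atTop_nhds_zero_nat (128 * M * C ^ 4 / c ^ 2))
  filter_upwards [hev, eventually_gt_atTop 0] with n hn hn0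
  refine inv_sq_mul_le_of_le_sq_mul (by positivity) hc hn
    (Finset.sum_nonneg fun i _ ↦ integral_nonneg fun w ↦ by positivity) ?_
  simpa [mul_div_assoc] using Finset.sum_le_card_nsmul _ _ _ (hterm n)

/-- Lyapunov's condition (with fourth moments) for the triangular array
`r_i = λ_i z_i² + b_i z_i`. -/
theorem statement16 {Ω : Type*} [MeasurableSpace Ω] (P : Measure Ω) [IsProbabilityMeasure P]
    (C : ℝ) (hC : 0 < C) (l b : ℕ → ℕ → ℝ)
    (hl : ∀ n : ℕ, ∀ i < n, |l n i| ≤ C / (n : ℝ) ^ ((3 : ℝ) / 2))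
    (hb : ∀ n : ℕ, ∀ i < n, |b n i| ≤ C / (n : ℝ) ^ ((3 : ℝ) / 2))
    (hliminf : ∃ c > (0 : ℝ), ∀ᶠ n : ℕ in atTop, c ≤ (n : ℝ) ^ 2 * sn2 l b n)
    (z : ℕ → Ω → ℝ) (hmeas : ∀ i, Measurable (z i))
    (hindep : iIndepFun z P)
    (hgauss : ∀ i, Measure.map (z i) P = gaussianReal 0 1) :
    Tendsto
      (fun n : ℕ => (sn2 l b n ^ 2)⁻¹ * ∑ i ∈ Finset.range n,
        ∫ w, (l n i * z i w ^ 2 + b n i * z i w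
          - ∫ w', (l n i * z i w' ^ 2 + b n i * z i w') ∂P) ^ 4 ∂P)
      atTop (nhds 0) :=
  statement16_general P C l b hl hb hliminf z hmeas hgauss

end LSSVM
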